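/- If A, B, and C are closed under stuttering, then ◇(↑A ∧ ○B ∧ C) is closed under stuttering, where ↑A := ¬A ∧ ○A. -/

import Mathlib

/-!
After `drop k`, stuttering at `i` is stuttering at `i - k` (if `k ≤ i`) or disappears (if `k > i`).
So `↑A ∧ ○B ∧ C` is invariant under stuttering at every position except `0`, and a witness `k` of
the eventuality can be shifted along with the stuttered position. The one exceptional case, a
witness exactly at the stuttered state, cannot occur: `↑A` fails on a sequence whose first state
is repeated.
-/

def State := String → Bool

def StSeq := ℕ → State

def drop (k : ℕ) (s : StSeq) : StSeq := fun n => s (k + n)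

def stutter (s : StSeq) (i : ℕ) : StSeq := fun n => if n ≤ i then s n else s (n - 1)

def CUS (F : StSeq → Prop) : Prop := ∀ (s : StSeq) (i : ℕ), F s ↔ F (stutter s i)

def Var (a : String) : StSeq → Prop := fun s => s 0 a = true

def Not' (F : StSeq → Prop) : StSeq → Prop := fun s => ¬ F s

def And' (F G : StSeq → Prop) : StSeq → Prop := fun s => F s ∧ G s

def Or' (F G : StSeq → Prop) : StSeq → Prop := fun s => F s ∨ G s

def Imp' (F G : StSeq → Prop) : StSeq → Prop := fun s => F s → G s

def Iff' (F G : StSeq → Prop) : StSeq → Prop := fun s => F s ↔ G s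

def Next (F : StSeq → Prop) : StSeq → Prop := fun s => F (drop 1 s)

def Always (F : StSeq → Prop) : StSeq → Prop := fun s => ∀ k, F (drop k s)

def Ev (F : StSeq → Prop) : StSeq → Prop := fun s => ∃ k, F (drop k s)

def Until' (F G : StSeq → Prop) : StSeq → Prop :=
  fun s => ∃ k, G (drop k s) ∧ ∀ j < k, F (drop j s)

def Up (F : StSeq → Prop) : StSeq → Prop := And' (Not' F) (Next F)

def Down (F : StSeq → Prop) : StSeq → Prop := And' F (Next (Not' F))

def AnyEdge (F : StSeq → Prop) : StSeq → Prop := Or' (Up F) (Down F)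

theorem drop_stutter_of_le {s : StSeq} {i k : ℕ} (hk : k ≤ i) :
    drop k (stutter s i) = stutter (drop k s) (i - k) := by
  funext n
  simp only [drop, stutter]
  by_cases h : k + n ≤ i
  · rw [if_pos h, if_pos (by omega)]
  · rw [if_neg h, if_neg (by omega), show k + n - 1 = k + (n - 1) by omega]

theorem drop_stutter_of_lt {s : StSeq} {i k : ℕ} (hk : i < k) :
    drop k (stutter s i) = drop (k - 1) s := by
  funext n
  simp only [drop, stutter]
  rw [if_neg (by omega), show k + n - 1 = k - 1 + n by omega]

theorem drop_one_stutter_zero (s : StSeq) : drop 1 (stutter s 0) = s := by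
  rw [drop_stutter_of_lt Nat.zero_lt_one]
  funext n
  simp [drop]

def CUSPos (F : StSeq → Prop) : Prop := ∀ (s : StSeq) (i : ℕ), 0 < i → (F s ↔ F (stutter s i))

theorem CUS.cusPos {F : StSeq → Prop} (hF : CUS F) : CUSPos F :=
  fun s i _ => hF s i

theorem CUS.next {F : StSeq → Prop} (hF : CUS F) : CUSPos (Next F) := by
  intro s i hi
  simp only [Next]
  rw [drop_stutter_of_le hi]
  exact hF _ _

theorem CUSPos.not {F : StSeq → Prop} (hF : CUSPos F) : CUSPos (Not' F) :=
  fun s i hi => not_congr (hF s i hi)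

theorem CUSPos.and {F G : StSeq → Prop} (hF : CUSPos F) (hG : CUSPos G) :
    CUSPos (And' F G) :=
  fun s i hi => and_congr (hF s i hi) (hG s i hi)

theorem CUS.not_up_stutter_zero {A : StSeq → Prop} (hA : CUS A) (s : StSeq) :
    ¬ Up A (stutter s 0) := by
  rintro ⟨hnot, hnext⟩
  rw [Next, drop_one_stutter_zero] at hnext
  exact hnot ((hA s 0).mp hnext)

theorem CUSPos.ev {F : StSeq → Prop} (hF : CUSPos F)
    (hzero : ∀ s, F (stutter s 0) → F s) : CUS (Ev F) := by
  intro s i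
  constructor
  · rintro ⟨k, hk⟩
    rcases lt_or_ge k i with hki | hik
    · exact ⟨k, by rwa [drop_stutter_of_le hki.le, ← hF _ _ (by omega)]⟩
    · exact ⟨k + 1, by rwa [drop_stutter_of_lt (by omega), Nat.add_sub_cancel]⟩
  · rintro ⟨k, hk⟩
    rcases lt_trichotomy k i with hki | rfl | hik
    · rw [drop_stutter_of_le hki.le, ← hF _ _ (by omega)] at hk
      exact ⟨k, hk⟩
    · rw [drop_stutter_of_le le_rfl, Nat.sub_self] at hk
      exact ⟨k, hzero _ hk⟩
    · rw [drop_stutter_of_lt hik] at hk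
      exact ⟨k - 1, hk⟩

theorem prop1 (A B C : StSeq → Prop) (hA : CUS A) (hB : CUS B) (hC : CUS C) :
    CUS (Ev (And' (Up A) (And' (Next B) C))) := by
  have hUp : CUSPos (Up A) := hA.cusPos.not.and hA.next
  refine (hUp.and (hB.next.and hC.cusPos)).ev ?_
  rintro s ⟨hup, -⟩
  exact absurd hup (hA.not_up_stutter_zero s)
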